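/- arXiv:math/0101039 — 2 statements merged into one kernel-verified Lean document; each statement's English description precedes it below -/
import Mathlib

section
/- Let (H, Φ, R) be a quasitriangular quasi-bialgebra over a field k. Then the product of H*_R is quasi-associative with respect to the associator Φ acting on both sides: for all f, g, l ∈ H*, (f·g)·l = Σ (X¹⇀f↼Y³)·((X²⇀g↼Y²)·(X³⇀l↼Y¹)), where Φ = Σ X¹⊗X²⊗X³ = Σ Y¹⊗Y²⊗Y³ denote two independent copies of the associator. -/
open TensorProduct LinearMap

noncomputable section

/-- Left regular action of `H` on its dual: `(h ⇀ p)(x) = p (x * h)`. -/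
def lact {k H : Type*} [Field k] [Ring H] [Algebra k H]
    (h : H) (p : Module.Dual k H) : Module.Dual k H :=
  p ∘ₗ LinearMap.mulRight k h

/-- Right regular action of `H` on its dual: `(p ↼ h)(x) = p (h * x)`. -/
def ract {k H : Type*} [Field k] [Ring H] [Algebra k H]
    (h : H) (p : Module.Dual k H) : Module.Dual k H :=
  p ∘ₗ LinearMap.mulLeft k h

variable (k H : Type*) [Field k] [Ring H] [Algebra k H]

/-- `R ⊗ 1` viewed in `H ⊗ (H ⊗ H)` (the element `R₁₂`). -/
def leg12 (R : H ⊗[k] H) : H ⊗[k] (H ⊗[k] H) :=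
  TensorProduct.assoc k H H H (R ⊗ₜ[k] (1 : H))

/-- The element `R₂₃ = 1 ⊗ R` of `H ⊗ (H ⊗ H)`. -/
def leg23 (R : H ⊗[k] H) : H ⊗[k] (H ⊗[k] H) := (1 : H) ⊗ₜ[k] R

/-- The element `R₁₃` of `H ⊗ (H ⊗ H)`. -/
def leg13 (R : H ⊗[k] H) : H ⊗[k] (H ⊗[k] H) :=
  lTensor H (TensorProduct.comm k H H).toLinearMap (leg12 k H R)

/-- `x ⊗ y ⊗ z ↦ y ⊗ x ⊗ z`. -/
def permYXZ : H ⊗[k] (H ⊗[k] H) →ₗ[k] H ⊗[k] (H ⊗[k] H) :=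
  (TensorProduct.assoc k H H H).toLinearMap
    ∘ₗ rTensor H (TensorProduct.comm k H H).toLinearMap
    ∘ₗ (TensorProduct.assoc k H H H).symm.toLinearMap

/-- `x ⊗ y ⊗ z ↦ x ⊗ z ⊗ y`. -/
def permXZY : H ⊗[k] (H ⊗[k] H) →ₗ[k] H ⊗[k] (H ⊗[k] H) :=
  lTensor H (TensorProduct.comm k H H).toLinearMap

/-- `x ⊗ y ⊗ z ↦ y ⊗ z ⊗ x`. -/
def permYZX : H ⊗[k] (H ⊗[k] H) →ₗ[k] H ⊗[k] (H ⊗[k] H) :=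
  permXZY k H ∘ₗ permYXZ k H

/-- `x ⊗ y ⊗ z ↦ z ⊗ x ⊗ y`. -/
def permZXY : H ⊗[k] (H ⊗[k] H) →ₗ[k] H ⊗[k] (H ⊗[k] H) :=
  permYXZ k H ∘ₗ permXZY k H

/-- A quasitriangular quasi-bialgebra `(H, Δ, ε, Φ, R)` over the field `k`. -/
structure QTQB where
  /-- the comultiplication (an algebra map) -/
  Δ : H →ₐ[k] H ⊗[k] H
  /-- the counit (an algebra map) -/
  ε : H →ₐ[k] k
  /-- the associator -/
  Φ : H ⊗[k] (H ⊗[k] H)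
  /-- the inverse of the associator -/
  Φinv : H ⊗[k] (H ⊗[k] H)
  Φ_right_inv : Φ * Φinv = 1
  Φ_left_inv : Φinv * Φ = 1
  /-- `(id ⊗ Δ)(Δ(h)) = Φ ((Δ ⊗ id)(Δ(h))) Φ⁻¹` -/
  quasi_coassoc : ∀ h : H,
    lTensor H Δ.toLinearMap (Δ h)
      = Φ * (TensorProduct.assoc k H H H (rTensor H Δ.toLinearMap (Δ h))) * Φinv
  /-- `(ε ⊗ id)(Δ(h)) = h` -/
  counit_left : ∀ h : H, TensorProduct.lid k H (rTensor H ε.toLinearMap (Δ h)) = h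
  /-- `(id ⊗ ε)(Δ(h)) = h` -/
  counit_right : ∀ h : H, TensorProduct.rid k H (lTensor H ε.toLinearMap (Δ h)) = h
  /-- `(id ⊗ id ⊗ Δ)(Φ) (Δ ⊗ id ⊗ id)(Φ) = (1 ⊗ Φ)(id ⊗ Δ ⊗ id)(Φ)(Φ ⊗ 1)` -/
  pentagon :
    lTensor H (lTensor H Δ.toLinearMap) Φ
      * (TensorProduct.assoc k H H (H ⊗[k] H)).toLinearMap
          (rTensor (H ⊗[k] H) Δ.toLinearMap Φ)
      = ((1 : H) ⊗ₜ[k] Φ)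
        * lTensor H ((TensorProduct.assoc k H H H).toLinearMap ∘ₗ rTensor H Δ.toLinearMap) Φ
        * lTensor H (lTensor H ((TensorProduct.mk k H H).flip 1)) Φ
  /-- `(id ⊗ ε ⊗ id)(Φ) = 1 ⊗ 1` -/
  counit_mid :
    lTensor H ((TensorProduct.lid k H).toLinearMap ∘ₗ rTensor H ε.toLinearMap) Φ = 1
  /-- the R-matrix -/
  R : H ⊗[k] H
  /-- the inverse of the R-matrix -/
  Rinv : H ⊗[k] H
  R_right_inv : R * Rinv = 1
  R_left_inv : Rinv * R = 1
  /-- `(Δ ⊗ id)(R) = Φ₃₁₂ R₁₃ Φ⁻¹₁₃₂ R₂₃ Φ` -/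
  qt1 : TensorProduct.assoc k H H H (rTensor H Δ.toLinearMap R)
      = permYZX k H Φ * leg13 k H R * permXZY k H Φinv * leg23 k H R * Φ
  /-- `(id ⊗ Δ)(R) = Φ⁻¹₂₃₁ R₁₃ Φ₂₁₃ R₁₂ Φ⁻¹` -/
  qt2 : lTensor H Δ.toLinearMap R
      = permZXY k H Φinv * leg13 k H R * permYXZ k H Φ * leg12 k H R * Φinv
  /-- `Δᶜᵒᵖ(h) R = R Δ(h)` -/
  qt3 : ∀ h : H, (TensorProduct.comm k H H) (Δ h) * R = R * Δ h

variable {k H}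

/-- The multiplication of `H*_R`: `(f · g)(h) = Σ g(h₁ R²) f(h₂ R¹)`,
i.e. `f · g = Σ (R² ⇀ g)(R¹ ⇀ f)`. -/
def QTQB.mulR (Q : QTQB k H) (f g : Module.Dual k H) : Module.Dual k H :=
  LinearMap.mul' k k ∘ₗ TensorProduct.map g f
    ∘ₗ LinearMap.mulRight k ((TensorProduct.comm k H H) Q.R) ∘ₗ Q.Δ.toLinearMap

/-!
Evaluated at `h`, `(f·g)·l` is `l ⊗ g ⊗ f` applied to `(id ⊗ Δ)(Δ(h) R₂₁) (R₂₁)₂₃`, while the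
summand of the right-hand side indexed by `X, Y` is `l ⊗ g ⊗ f` applied to
`Y (Δ ⊗ id)(Δ(h) R₂₁) (R₂₁)₁₂ X₃₂₁`. After summing, it remains to prove
`(id ⊗ Δ)(Δ(h) R₂₁) (R₂₁)₂₃ = Φ (Δ ⊗ id)(Δ(h) R₂₁) (R₂₁)₁₂ Φ₃₂₁` in `H ⊗ H ⊗ H`.
Quasi-coassociativity turns `(id ⊗ Δ)(Δ h)` into `Φ (Δ ⊗ id)(Δ h) Φ⁻¹`, and what is left,
`Φ⁻¹ (id ⊗ Δ)(R₂₁) (R₂₁)₂₃ = (Δ ⊗ id)(R₂₁) (R₂₁)₁₂ Φ₃₂₁`, is the image under the flip of legs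
`1` and `3` of `swap₁₂ ((Δ ⊗ id) R) R₁₂ = Φ₃₂₁ swap₂₃ ((id ⊗ Δ) R) R₂₃ Φ`, which follows from the
two hexagon axioms and `R Δ = Δᶜᵒᵖ R`.
-/

section TriplePermutation

variable {R A : Type*} [CommSemiring R] [Semiring A] [Algebra R A]

def swap₁₂ : A ⊗[R] (A ⊗[R] A) ≃ₐ[R] A ⊗[R] (A ⊗[R] A) :=
  (Algebra.TensorProduct.assoc R R R A A A).symm.trans
    ((Algebra.TensorProduct.congr (Algebra.TensorProduct.comm R A A) AlgEquiv.refl).trans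
      (Algebra.TensorProduct.assoc R R R A A A))

def swap₂₃ : A ⊗[R] (A ⊗[R] A) ≃ₐ[R] A ⊗[R] (A ⊗[R] A) :=
  Algebra.TensorProduct.congr AlgEquiv.refl (Algebra.TensorProduct.comm R A A)

def swap₁₃ : A ⊗[R] (A ⊗[R] A) ≃ₐ[R] A ⊗[R] (A ⊗[R] A) :=
  swap₁₂.trans (swap₂₃.trans swap₁₂)

lemma swap₂₃_tmul_left (x : A) (u : A ⊗[R] A) :
    swap₂₃ (x ⊗ₜ[R] u) = x ⊗ₜ TensorProduct.comm R A A u := rfl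

@[simp]
lemma swap₁₃_tmul (x y z : A) : swap₁₃ (x ⊗ₜ[R] (y ⊗ₜ z)) = z ⊗ₜ (y ⊗ₜ x) := rfl

lemma swap₁₂_swap₂₃_swap₁₂ (w : A ⊗[R] (A ⊗[R] A)) :
    swap₁₂ (swap₂₃ (swap₁₂ w)) = swap₁₃ w := rfl

@[simp]
lemma swap₁₃_swap₁₃ (w : A ⊗[R] (A ⊗[R] A)) : swap₁₃ (swap₁₃ w) = w := by
  have h : (swap₁₃ : A ⊗[R] (A ⊗[R] A) ≃ₐ[R] _).toLinearMap ∘ₗ swap₁₃.toLinearMap = .id :=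
    TensorProduct.ext_threefold' fun _ _ _ => rfl
  exact LinearMap.congr_fun h w

lemma swap₁₃_swap₁₂_assoc (w : (A ⊗[R] A) ⊗[R] A) :
    swap₁₃ (swap₁₂ (TensorProduct.assoc R A A A w)) = TensorProduct.comm R (A ⊗[R] A) A w := by
  have h : (swap₁₃ : A ⊗[R] (A ⊗[R] A) ≃ₐ[R] _).toLinearMap ∘ₗ swap₁₂.toLinearMap
        ∘ₗ (TensorProduct.assoc R A A A).toLinearMap
      = (TensorProduct.comm R (A ⊗[R] A) A).toLinearMap :=
    TensorProduct.ext_threefold fun _ _ _ => rfl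
  exact LinearMap.congr_fun h w

lemma swap₁₃_swap₂₃ (w : A ⊗[R] (A ⊗[R] A)) :
    swap₁₃ (swap₂₃ w) = TensorProduct.assoc R A A A (TensorProduct.comm R A (A ⊗[R] A) w) := by
  have h : (swap₁₃ : A ⊗[R] (A ⊗[R] A) ≃ₐ[R] _).toLinearMap ∘ₗ swap₂₃.toLinearMap
      = (TensorProduct.assoc R A A A).toLinearMap
          ∘ₗ (TensorProduct.comm R A (A ⊗[R] A)).toLinearMap :=
    TensorProduct.ext_threefold' fun _ _ _ => rfl
  exact LinearMap.congr_fun h w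

end TriplePermutation

section TripleEvaluation

variable {R M : Type*} [CommSemiring R] [AddCommMonoid M] [Module R M]

def eval₃ (p q r : Module.Dual R M) : M ⊗[R] (M ⊗[R] M) →ₗ[R] R :=
  mul' R R ∘ₗ TensorProduct.map p (mul' R R ∘ₗ TensorProduct.map q r)

@[simp]
lemma eval₃_tmul (p q r : Module.Dual R M) (x y z : M) :
    eval₃ p q r (x ⊗ₜ (y ⊗ₜ z)) = p x * (q y * r z) := rfl

lemma eval₃_tmul_left (p q r : Module.Dual R M) (x : M) (u : M ⊗[R] M) :
    eval₃ p q r (x ⊗ₜ u) = p x * mul' R R (TensorProduct.map q r u) := rfl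

lemma eval₃_assoc_tmul (p q r : Module.Dual R M) (u : M ⊗[R] M) (z : M) :
    eval₃ p q r (TensorProduct.assoc R M M M (u ⊗ₜ z))
      = mul' R R (TensorProduct.map p q u) * r z :=
  u.induction_on (by simp) (fun x y => by simp [mul_assoc])
    fun u v hu hv => by rw [add_tmul, map_add, map_add, hu, hv, map_add, map_add, add_mul]

end TripleEvaluation

lemma eval₃_lact_ract (p q r : Module.Dual k H) (a₁ a₂ a₃ b₁ b₂ b₃ : H)
    (w : H ⊗[k] (H ⊗[k] H)) :
    eval₃ (lact a₁ (ract b₁ p)) (lact a₂ (ract b₂ q)) (lact a₃ (ract b₃ r)) w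
      = eval₃ p q r ((b₁ ⊗ₜ[k] (b₂ ⊗ₜ[k] b₃)) * w * (a₁ ⊗ₜ[k] (a₂ ⊗ₜ[k] a₃))) := by
  have h : eval₃ (lact a₁ (ract b₁ p)) (lact a₂ (ract b₂ q)) (lact a₃ (ract b₃ r))
      = eval₃ p q r ∘ₗ mulRight k (a₁ ⊗ₜ[k] (a₂ ⊗ₜ[k] a₃))
          ∘ₗ mulLeft k (b₁ ⊗ₜ[k] (b₂ ⊗ₜ[k] b₃)) :=
    TensorProduct.ext_threefold' fun x y z => by
      simp [Algebra.TensorProduct.tmul_mul_tmul, lact, ract, mul_assoc]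
  exact LinearMap.congr_fun h w

lemma sum_eval₃_lact_ract {ι κ : Type*} [Fintype ι] [Fintype κ] (p q r : Module.Dual k H)
    (X₁ X₂ X₃ : ι → H) (Y₁ Y₂ Y₃ : κ → H) (w : H ⊗[k] (H ⊗[k] H)) :
    ∑ i, ∑ j, eval₃ (lact (X₃ i) (ract (Y₁ j) p)) (lact (X₂ i) (ract (Y₂ j) q))
        (lact (X₁ i) (ract (Y₃ j) r)) w
      = eval₃ p q r ((∑ j, Y₁ j ⊗ₜ[k] (Y₂ j ⊗ₜ[k] Y₃ j)) * w
          * swap₁₃ (∑ i, X₁ i ⊗ₜ[k] (X₂ i ⊗ₜ[k] X₃ i))) := by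
  simp only [eval₃_lact_ract, map_sum, swap₁₃_tmul, Finset.mul_sum, Finset.sum_mul]

lemma swap₁₂_leg13 (x : H ⊗[k] H) : swap₁₂ (leg13 k H x) = leg23 k H x :=
  x.induction_on (by simp [leg12, leg13, leg23]) (fun _ _ => rfl)
    fun _ _ hx hy => by simp_all [leg12, leg13, leg23, add_tmul, tmul_add]

lemma swap₁₂_leg23 (x : H ⊗[k] H) : swap₁₂ (leg23 k H x) = leg13 k H x :=
  x.induction_on (by simp [leg12, leg13, leg23]) (fun _ _ => rfl)
    fun _ _ hx hy => by simp_all [leg12, leg13, leg23, add_tmul, tmul_add]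

lemma swap₁₃_leg12 (x : H ⊗[k] H) :
    swap₁₃ (leg12 k H x) = leg23 k H (TensorProduct.comm k H H x) :=
  x.induction_on (by simp [leg12, leg23]) (fun _ _ => rfl)
    fun _ _ hx hy => by simp_all [leg12, leg23, add_tmul, tmul_add]

lemma swap₁₃_leg23 (x : H ⊗[k] H) :
    swap₁₃ (leg23 k H x) = leg12 k H (TensorProduct.comm k H H x) :=
  x.induction_on (by simp [leg12, leg23]) (fun _ _ => rfl)
    fun _ _ hx hy => by simp_all [leg12, leg23, add_tmul, tmul_add]

namespace QTQB

variable (Q : QTQB k H)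

def R₂₁ : H ⊗[k] H := TensorProduct.comm k H H Q.R

def comulTensorId : H ⊗[k] H →ₐ[k] H ⊗[k] (H ⊗[k] H) :=
  (Algebra.TensorProduct.assoc k k k H H H).toAlgHom.comp
    (Algebra.TensorProduct.map Q.Δ (AlgHom.id k H))

def idTensorComul : H ⊗[k] H →ₐ[k] H ⊗[k] (H ⊗[k] H) :=
  Algebra.TensorProduct.map (AlgHom.id k H) Q.Δ

lemma comulTensorId_apply (x : H ⊗[k] H) :
    Q.comulTensorId x = TensorProduct.assoc k H H H (rTensor H Q.Δ.toLinearMap x) := rfl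

lemma idTensorComul_apply (x : H ⊗[k] H) :
    Q.idTensorComul x = lTensor H Q.Δ.toLinearMap x := rfl

lemma idTensorComul_comul (h : H) :
    Q.idTensorComul (Q.Δ h) = Q.Φ * Q.comulTensorId (Q.Δ h) * Q.Φinv :=
  Q.quasi_coassoc h

lemma comulTensorId_R : Q.comulTensorId Q.R
    = swap₂₃ (swap₁₂ Q.Φ) * leg13 k H Q.R * swap₂₃ Q.Φinv * leg23 k H Q.R * Q.Φ :=
  Q.qt1

lemma idTensorComul_R : Q.idTensorComul Q.R
    = swap₁₂ (swap₂₃ Q.Φinv) * leg13 k H Q.R * swap₁₂ Q.Φ * leg12 k H Q.R * Q.Φinv :=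
  Q.qt2

lemma mulR_apply (f g : Module.Dual k H) (h : H) :
    Q.mulR f g h = mul' k k (TensorProduct.map g f (Q.Δ h * Q.R₂₁)) := rfl

lemma mul'_map_mulR_right (l f g : Module.Dual k H) (w : H ⊗[k] H) :
    mul' k k (TensorProduct.map l (Q.mulR f g) w)
      = eval₃ l g f (Q.idTensorComul w * leg23 k H Q.R₂₁) := by
  have h : mul' k k ∘ₗ TensorProduct.map l (Q.mulR f g)
      = eval₃ l g f ∘ₗ mulRight k (leg23 k H Q.R₂₁)
          ∘ₗ Q.idTensorComul.toLinearMap :=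
    TensorProduct.ext' fun a b => by
      simp [idTensorComul, leg23, Algebra.TensorProduct.tmul_mul_tmul, eval₃_tmul_left,
        mulR_apply]
  exact LinearMap.congr_fun h w

lemma mul'_map_mulR_left (f g l : Module.Dual k H) (w : H ⊗[k] H) :
    mul' k k (TensorProduct.map (Q.mulR g l) f w)
      = eval₃ l g f (Q.comulTensorId w * leg12 k H Q.R₂₁) := by
  have h : mul' k k ∘ₗ TensorProduct.map (Q.mulR g l) f
      = eval₃ l g f ∘ₗ mulRight k (leg12 k H Q.R₂₁)
          ∘ₗ Q.comulTensorId.toLinearMap :=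
    TensorProduct.ext' fun a b => by
      have hmul : Q.comulTensorId (a ⊗ₜ b) * leg12 k H Q.R₂₁
          = TensorProduct.assoc k H H H ((Q.Δ a * Q.R₂₁) ⊗ₜ b) :=
        (map_mul (Algebra.TensorProduct.assoc k k k H H H) (Q.Δ a ⊗ₜ b) (Q.R₂₁ ⊗ₜ 1)).symm.trans
          (by rw [Algebra.TensorProduct.tmul_mul_tmul, mul_one]; rfl)
      simp [hmul, eval₃_assoc_tmul, mulR_apply]
  exact LinearMap.congr_fun h w

lemma swap₁₃_swap₁₂_comulTensorId (x : H ⊗[k] H) :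
    swap₁₃ (swap₁₂ (Q.comulTensorId x)) = Q.idTensorComul (TensorProduct.comm k H H x) := by
  rw [comulTensorId_apply, swap₁₃_swap₁₂_assoc, idTensorComul_apply, lTensor_comm]

lemma swap₁₃_swap₂₃_idTensorComul (x : H ⊗[k] H) :
    swap₁₃ (swap₂₃ (Q.idTensorComul x)) = Q.comulTensorId (TensorProduct.comm k H H x) := by
  rw [idTensorComul_apply, swap₁₃_swap₂₃, comulTensorId_apply, rTensor_comm]

lemma leg23_R_mul_idTensorComul (x : H ⊗[k] H) :
    leg23 k H Q.R * Q.idTensorComul x = swap₂₃ (Q.idTensorComul x) * leg23 k H Q.R := by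
  have h : mulLeft k (leg23 k H Q.R) ∘ₗ Q.idTensorComul.toLinearMap
      = mulRight k (leg23 k H Q.R) ∘ₗ swap₂₃.toLinearMap ∘ₗ Q.idTensorComul.toLinearMap :=
    TensorProduct.ext' fun a b => by
      simp [leg23, idTensorComul, swap₂₃_tmul_left, Algebra.TensorProduct.tmul_mul_tmul, Q.qt3 b]
  exact LinearMap.congr_fun h x

lemma swap₁₂_comulTensorId_R_mul_leg12 :
    swap₁₂ (Q.comulTensorId Q.R) * leg12 k H Q.R
      = swap₁₃ Q.Φ * swap₂₃ (Q.idTensorComul Q.R) * leg23 k H Q.R * Q.Φ := by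
  have hR : swap₁₂ (swap₂₃ Q.Φinv) * leg13 k H Q.R * swap₁₂ Q.Φ * leg12 k H Q.R
      = Q.idTensorComul Q.R * Q.Φ := by
    rw [idTensorComul_R, mul_assoc _ Q.Φinv, Q.Φ_left_inv, mul_one]
  calc swap₁₂ (Q.comulTensorId Q.R) * leg12 k H Q.R
      = swap₁₃ Q.Φ * leg23 k H Q.R
          * (swap₁₂ (swap₂₃ Q.Φinv) * leg13 k H Q.R * swap₁₂ Q.Φ * leg12 k H Q.R) := by
        simp only [comulTensorId_R, map_mul, swap₁₂_swap₂₃_swap₁₂, swap₁₂_leg13, swap₁₂_leg23,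
          mul_assoc]
    _ = swap₁₃ Q.Φ * (leg23 k H Q.R * Q.idTensorComul Q.R) * Q.Φ := by
        rw [hR]; simp only [mul_assoc]
    _ = swap₁₃ Q.Φ * swap₂₃ (Q.idTensorComul Q.R) * leg23 k H Q.R * Q.Φ := by
        rw [leg23_R_mul_idTensorComul]; simp only [mul_assoc]

lemma Φinv_mul_idTensorComul_R₂₁_mul_leg23 :
    Q.Φinv * Q.idTensorComul Q.R₂₁ * leg23 k H Q.R₂₁
      = Q.comulTensorId Q.R₂₁ * leg12 k H Q.R₂₁ * swap₁₃ Q.Φ := by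
  have h := congrArg swap₁₃ Q.swap₁₂_comulTensorId_R_mul_leg12
  rw [R₂₁]
  simp only [map_mul, swap₁₃_swap₁₂_comulTensorId, swap₁₃_leg12, swap₁₃_swap₁₃,
    swap₁₃_swap₂₃_idTensorComul, swap₁₃_leg23] at h
  rw [mul_assoc Q.Φinv, h, ← mul_assoc, ← mul_assoc, ← mul_assoc, Q.Φ_left_inv, one_mul]

lemma idTensorComul_comul_mul_R₂₁_mul_leg23 (h : H) :
    Q.idTensorComul (Q.Δ h * Q.R₂₁) * leg23 k H Q.R₂₁
      = Q.Φ * (Q.comulTensorId (Q.Δ h * Q.R₂₁) * leg12 k H Q.R₂₁) * swap₁₃ Q.Φ := by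
  rw [map_mul, idTensorComul_comul, mul_assoc, mul_assoc, ← mul_assoc Q.Φinv,
    Φinv_mul_idTensorComul_R₂₁_mul_leg23]
  simp only [map_mul, mul_assoc]

end QTQB

/-- Let `(H, Φ, R)` be a quasitriangular quasi-bialgebra over a field `k`.
Then the product of `H*_R` is quasi-associative with respect to the associator `Φ` acting
on both sides: for all `f, g, l ∈ H*`,
`(f·g)·l = Σ (X¹ ⇀ f ↼ Y³) · ((X² ⇀ g ↼ Y²) · (X³ ⇀ l ↼ Y¹))`,
where `Φ = Σ X¹⊗X²⊗X³ = Σ Y¹⊗Y²⊗Y³` denote two independent (finite) representations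
of the associator. -/
theorem heisenberg_quasi_associative
    {k H : Type*} [Field k] [Ring H] [Algebra k H] (Q : QTQB k H) :
    ∀ (f g l : Module.Dual k H) (n m : ℕ)
      (X₁ X₂ X₃ : Fin n → H) (Y₁ Y₂ Y₃ : Fin m → H),
      Q.Φ = ∑ i, X₁ i ⊗ₜ[k] (X₂ i ⊗ₜ[k] X₃ i) →
      Q.Φ = ∑ j, Y₁ j ⊗ₜ[k] (Y₂ j ⊗ₜ[k] Y₃ j) →
      Q.mulR (Q.mulR f g) l
        = ∑ i, ∑ j, Q.mulR (lact (X₁ i) (ract (Y₃ j) f))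
            (Q.mulR (lact (X₂ i) (ract (Y₂ j) g)) (lact (X₃ i) (ract (Y₁ j) l))) := by
  intro f g l n m X₁ X₂ X₃ Y₁ Y₂ Y₃ hX hY
  ext h
  calc Q.mulR (Q.mulR f g) l h
      = eval₃ l g f (Q.idTensorComul (Q.Δ h * Q.R₂₁) * leg23 k H Q.R₂₁) :=
        Q.mul'_map_mulR_right l f g _
    _ = eval₃ l g f
          (Q.Φ * (Q.comulTensorId (Q.Δ h * Q.R₂₁) * leg12 k H Q.R₂₁) * swap₁₃ Q.Φ) := by
        rw [Q.idTensorComul_comul_mul_R₂₁_mul_leg23]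
    _ = ∑ i, ∑ j, eval₃ (lact (X₃ i) (ract (Y₁ j) l)) (lact (X₂ i) (ract (Y₂ j) g))
          (lact (X₁ i) (ract (Y₃ j) f)) (Q.comulTensorId (Q.Δ h * Q.R₂₁) * leg12 k H Q.R₂₁) := by
        rw [sum_eval₃_lact_ract, ← hX, ← hY]
    _ = _ := by
        simp only [LinearMap.sum_apply, Q.mulR_apply, Q.mul'_map_mulR_left]
end
end

section
/- Let (H, Φ, R) be a quasitriangular quasi-bialgebra over a field k and let U = Σ U¹⊗U² = R⁻¹. Then H*_R is quantum commutative as an algebra in the braided category of H-bimodules: for all f, g ∈ H*, f·g = Σ (R²⇀g↼U¹)·(R¹⇀f↼U²). -/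
open TensorProduct LinearMap

noncomputable section

variable (k H : Type*) [Field k] [Ring H] [Algebra k H]

variable {k H}

section Aux

variable {k H : Type*} [Field k] [Ring H] [Algebra k H]

lemma comm_mul' (x y : H ⊗[k] H) :
    TensorProduct.comm k H H (x * y)
      = TensorProduct.comm k H H x * TensorProduct.comm k H H y := by
  induction x using TensorProduct.induction_on with
  | zero => simp
  | tmul a b =>
    induction y using TensorProduct.induction_on with
    | zero => simp
    | tmul c d => simp [Algebra.TensorProduct.tmul_mul_tmul]
    | add y1 y2 h1 h2 => simp only [mul_add, map_add, h1, h2]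
  | add x1 x2 h1 h2 => simp only [add_mul, map_add, h1, h2]

lemma comm_one' : TensorProduct.comm k H H (1 : H ⊗[k] H) = 1 := by
  rw [Algebra.TensorProduct.one_def]
  simp [Algebra.TensorProduct.one_def]

lemma comm_comm' (x : H ⊗[k] H) :
    TensorProduct.comm k H H (TensorProduct.comm k H H x) = x := by
  induction x using TensorProduct.induction_on with
  | zero => simp
  | tmul a b => simp
  | add x y hx hy => simp [hx, hy]

lemma eval_key (f g : Module.Dual k H) (a b c d : H) (x : H ⊗[k] H) :
    (LinearMap.mul' k k) (TensorProduct.map (lact a (ract b f)) (lact c (ract d g)) x)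
      = (LinearMap.mul' k k)
          (TensorProduct.map f g ((b ⊗ₜ[k] d) * x * (a ⊗ₜ[k] c))) := by
  induction x using TensorProduct.induction_on with
  | zero => simp
  | tmul u v =>
    simp [lact, ract, Algebra.TensorProduct.tmul_mul_tmul, mul_assoc]
  | add x1 x2 h1 h2 =>
    simp only [map_add, add_mul, mul_add, h1, h2]

lemma eval_comm' (f g : Module.Dual k H) (x : H ⊗[k] H) :
    (LinearMap.mul' k k) (TensorProduct.map g f x)
      = (LinearMap.mul' k k) (TensorProduct.map f g (TensorProduct.comm k H H x)) := by
  induction x using TensorProduct.induction_on with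
  | zero => simp
  | tmul u v => simp [mul_comm]
  | add x1 x2 h1 h2 => simp only [map_add, h1, h2]

end Aux

/-- Let `(H, Φ, R)` be a quasitriangular quasi-bialgebra over a field `k`
and let `U = Σ U¹⊗U² = R⁻¹`. Then `H*_R` is quantum commutative as an algebra in the
braided category of `H`-bimodules: for all `f, g ∈ H*`,
`f · g = Σ (R² ⇀ g ↼ U¹) · (R¹ ⇀ f ↼ U²)`
(the Sweedler sums running over any finite representations of `R` and of `U = R⁻¹`). -/
theorem heisenberg_quantum_commutative
    {k H : Type*} [Field k] [Ring H] [Algebra k H] (Q : QTQB k H) :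
    ∀ (f g : Module.Dual k H) (n m : ℕ)
      (R₁ R₂ : Fin n → H) (U₁ U₂ : Fin m → H),
      Q.R = ∑ i, R₁ i ⊗ₜ[k] R₂ i →
      Q.Rinv = ∑ j, U₁ j ⊗ₜ[k] U₂ j →
      Q.mulR f g
        = ∑ i, ∑ j, Q.mulR (lact (R₂ i) (ract (U₁ j) g)) (lact (R₁ i) (ract (U₂ j) f)) := by
  intro f g n m R₁ R₂ U₁ U₂ hR hU
  ext h
  set X : H ⊗[k] H := (Q.Δ h) * TensorProduct.comm k H H Q.R with hX
  have hL : (Q.mulR f g) h = (LinearMap.mul' k k) (TensorProduct.map g f X) := rfl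
  have hRHSterm : ∀ (i : Fin n) (j : Fin m),
      (Q.mulR (lact (R₂ i) (ract (U₁ j) g)) (lact (R₁ i) (ract (U₂ j) f))) h
        = (LinearMap.mul' k k) (TensorProduct.map f g
            ((U₂ j ⊗ₜ[k] U₁ j) * X * (R₁ i ⊗ₜ[k] R₂ i))) := by
    intro i j
    exact eval_key f g (R₁ i) (U₂ j) (R₂ i) (U₁ j) X
  have hsum : (∑ i, ∑ j,
      Q.mulR (lact (R₂ i) (ract (U₁ j) g)) (lact (R₁ i) (ract (U₂ j) f))) h
      = (LinearMap.mul' k k) (TensorProduct.map f g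
          (TensorProduct.comm k H H Q.Rinv * X * Q.R)) := by
    rw [LinearMap.sum_apply]
    simp only [LinearMap.sum_apply, hRHSterm, ← map_sum]
    congr 2
    rw [hR, hU, map_sum]
    simp only [TensorProduct.comm_tmul]
    rw [Finset.sum_mul, Finset.sum_mul, Finset.sum_comm]
    refine Finset.sum_congr rfl fun i _ => ?_
    rw [Finset.mul_sum]
  -- key algebraic identity
  have hqt : Q.Δ h * TensorProduct.comm k H H Q.R
      = TensorProduct.comm k H H Q.R * TensorProduct.comm k H H (Q.Δ h) := by
    have := congrArg (TensorProduct.comm k H H) (Q.qt3 h)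
    rw [comm_mul', comm_mul', comm_comm'] at this
    exact this
  have hkey : TensorProduct.comm k H H X
      = TensorProduct.comm k H H Q.Rinv * X * Q.R := by
    have hinv : TensorProduct.comm k H H Q.Rinv * TensorProduct.comm k H H Q.R = 1 := by
      rw [← comm_mul', Q.R_left_inv, comm_one']
    rw [hX, comm_mul', comm_comm', hqt, ← mul_assoc, hinv, one_mul]
  rw [hL, hsum, eval_comm' f g X, hkey]
end
end
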